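/- arXiv:2512.08114 — 5 statements merged into one kernel-verified Lean document; each statement's English description precedes it below -/
import Mathlib

section
/- Let E be a Banach space over the field 𝕜 ∈ {ℝ, ℂ} and let 0 < δ < 2. Then for every x ∈ E with ‖x‖ = 1 and every y ∈ E with ‖y‖ ≤ 1 satisfying inf_{λ ∈ 𝕜, |λ| = 1} ‖x − λ·y‖ ≥ δ, there exists a continuous linear functional x* on E with ‖x*‖ = 1 such that | |x*(x)| − |x*(y)| | ≥ δ/3. -/
/-! Let `f` norm `x`. If `‖f y‖` is within `δ / 3` of `1`, rotate `y` by a unimodular `l` with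
`l * f y = ‖f y‖` and let `g` norm `x - l • y`. The functional `g - g x • f` vanishes at `x`, has
norm at most `2`, and `g (x - l • y) = g x * (1 - ‖f y‖) - l * (g - g x • f) y`. As
`‖x - l • y‖ ≥ δ`, it takes at `y` a value of norm more than `δ / 3` times its own norm, so once
normalised it separates `x` from `y`. -/

namespace ContinuousLinearMap

variable {𝕜 E F : Type*} [RCLike 𝕜] [NormedAddCommGroup E] [NormedSpace 𝕜 E]
  [NormedAddCommGroup F] [NormedSpace 𝕜 F]

theorem abs_norm_sub_norm_le_mul_opNorm {x y : E} {c : ℝ}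
    (hc : ∀ f : E →L[𝕜] F, ‖f‖ = 1 → |‖f x‖ - ‖f y‖| ≤ c) (φ : E →L[𝕜] F) :
    |‖φ x‖ - ‖φ y‖| ≤ c * ‖φ‖ := by
  rcases eq_or_ne φ 0 with rfl | hφ
  · simp
  have hφ' : 0 < ‖φ‖ := norm_pos_iff.mpr hφ
  have hnorm (z : E) : ‖((‖φ‖⁻¹ : 𝕜) • φ) z‖ = ‖φ‖⁻¹ * ‖φ z‖ := by
    simp [norm_smul]
  have := hc _ (norm_smul_inv_norm (𝕜 := 𝕜) hφ)
  rw [hnorm, hnorm, ← mul_sub, abs_mul, abs_of_pos (inv_pos.mpr hφ'), inv_mul_le_iff₀ hφ'] at this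
  linarith

theorem norm_apply_sub_smul_le (f g : E →L[𝕜] 𝕜) (x : E) {y : E} {l : 𝕜}
    (hl : ‖l‖ = 1) (hly : (‖f y‖ : 𝕜) = l * f y) :
    ‖g (x - l • y)‖ ≤ ‖g x‖ * |1 - ‖f y‖| + ‖(g - g x • f) y‖ := by
  have hsplit : g (x - l • y) = g x * ((1 - ‖f y‖ : ℝ) : 𝕜) - l * (g - g x • f) y := by
    simp only [map_sub, map_smul, smul_eq_mul, map_one, hly, sub_apply, smul_apply]
    ring
  calc ‖g (x - l • y)‖ ≤ ‖g x * ((1 - ‖f y‖ : ℝ) : 𝕜)‖ + ‖l * (g - g x • f) y‖ :=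
        hsplit ▸ norm_sub_le _ _
    _ = ‖g x‖ * |1 - ‖f y‖| + ‖(g - g x • f) y‖ := by
        rw [norm_mul, norm_mul, RCLike.norm_ofReal, hl, one_mul]

end ContinuousLinearMap

theorem separating_functional_general {𝕜 E : Type*} [RCLike 𝕜] [NormedAddCommGroup E]
    [NormedSpace 𝕜 E] (δ : ℝ) (hδ0 : 0 < δ)
    (x y : E) (hx : ‖x‖ = 1)
    (h : δ ≤ ⨅ l : {c : 𝕜 // ‖c‖ = 1}, ‖x - (l : 𝕜) • y‖) :
    ∃ f : E →L[𝕜] 𝕜, ‖f‖ = 1 ∧ δ / 3 ≤ |‖f x‖ - ‖f y‖| := by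
  obtain ⟨f, hf, hfx⟩ := exists_dual_vector 𝕜 x (by rw [hx]; exact one_ne_zero)
  rw [hx, RCLike.ofReal_one] at hfx
  by_contra! H
  have hfy : |1 - ‖f y‖| < δ / 3 := by simpa [hfx] using H f hf
  obtain ⟨l, hl, hly⟩ := RCLike.exists_norm_eq_mul_self (f y)
  have hδl : δ ≤ ‖x - l • y‖ :=
    h.trans (ciInf_le ⟨0, by rintro _ ⟨_, rfl⟩; positivity⟩ (⟨l, hl⟩ : {c : 𝕜 // ‖c‖ = 1}))
  obtain ⟨g, hg, hgz⟩ := exists_dual_vector'' 𝕜 (x - l • y)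
  have hgx : ‖g x‖ ≤ 1 := (g.le_opNorm x).trans (by rw [hx, mul_one]; exact hg)
  have hh : ‖(g - g x • f) y‖ ≤ δ / 3 * 2 := by
    have hbound := ContinuousLinearMap.abs_norm_sub_norm_le_mul_opNorm
      (fun φ hφ => (H φ hφ).le) (g - g x • f)
    have hhx : (g - g x • f) x = 0 := by simp [hfx]
    have hnorm : ‖g - g x • f‖ ≤ 2 := calc
      ‖g - g x • f‖ ≤ ‖g‖ + ‖g x‖ * ‖f‖ := (norm_sub_le _ _).trans_eq (by rw [norm_smul])
      _ ≤ 2 := by rw [hf]; linarith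
    rw [hhx, norm_zero, zero_sub, abs_neg, abs_norm] at hbound
    exact hbound.trans (by gcongr)
  have hδg := ContinuousLinearMap.norm_apply_sub_smul_le f g x hl hly
  rw [hgz, RCLike.norm_coe_norm] at hδg
  linarith [mul_le_mul_of_nonneg_right hgx (abs_nonneg (1 - ‖f y‖))]

/-- Let `E` be a Banach space over `𝕜 ∈ {ℝ, ℂ}` and `0 < δ < 2`. For every
`x ∈ E` with `‖x‖ = 1` and `y ∈ E` with `‖y‖ ≤ 1` satisfying
`inf_{‖λ‖ = 1} ‖x - λ • y‖ ≥ δ`, there is a continuous linear functional `x*` of norm one with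
`| ‖x* x‖ - ‖x* y‖ | ≥ δ / 3`. -/
theorem separating_functional {𝕜 E : Type*} [RCLike 𝕜] [NormedAddCommGroup E]
    [NormedSpace 𝕜 E] [CompleteSpace E] (δ : ℝ) (hδ0 : 0 < δ) (hδ2 : δ < 2)
    (x y : E) (hx : ‖x‖ = 1) (hy : ‖y‖ ≤ 1)
    (h : δ ≤ ⨅ l : {c : 𝕜 // ‖c‖ = 1}, ‖x - (l : 𝕜) • y‖) :
    ∃ f : E →L[𝕜] 𝕜, ‖f‖ = 1 ∧ δ / 3 ≤ |‖f x‖ - ‖f y‖| :=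
  separating_functional_general δ hδ0 x y hx h
end

section
/- Let E be a complex Banach space and let K = B_{E*} be the closed unit ball of its dual endowed with the weak* topology (a compact Hausdorff space). Then the canonical evaluation map j : E → C(K), defined by j(x)(x*) = x*(x), is a linear isometric embedding and j(E) does 12-SPR in C(K). -/
/-!
Every `χ` in the unit ball of `E*` is a point of `K`, so `a = ‖|jx| - |jy|‖` bounds
`|‖χ x‖ - ‖χ y‖|` for all such `χ`; in particular `|‖x‖ - ‖y‖| ≤ a`. The functionals vanishing
on `y` then bound, by Hahn–Banach in `E ⧸ ℂ ∙ y`, the distance from `x` to the line `ℂ ∙ y`: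
`‖x - μ y‖ ≤ a` for some `μ`. Rotating `μ` onto the unit circle costs
`|‖μ y‖ - ‖y‖| ≤ ‖x - μ y‖ + |‖x‖ - ‖y‖| ≤ 2a`, so `‖x - λ y‖ ≤ 3a` for some `|λ| = 1`.
-/

noncomputable section

/-- The pointwise modulus of a continuous function, as a real-valued continuous function. -/
def cmAbs {K : Type*} [TopologicalSpace K] {𝕜 : Type*} [RCLike 𝕜]
    (f : C(K, 𝕜)) : C(K, ℝ) :=
  ⟨fun x => ‖f x‖, (map_continuous f).norm⟩

/-- `inf_{‖λ‖ = 1} ‖f - λ • g‖`. -/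
def sprInf {K : Type*} [TopologicalSpace K] [CompactSpace K] {𝕜 : Type*} [RCLike 𝕜]
    (f g : C(K, 𝕜)) : ℝ :=
  ⨅ l : {c : 𝕜 // ‖c‖ = 1}, ‖f - (l : 𝕜) • g‖

/-- A subspace `E ⊆ C(K, 𝕜)` does `C`-stable phase retrieval. -/
def DoesCSPR {K : Type*} [TopologicalSpace K] [CompactSpace K] {𝕜 : Type*} [RCLike 𝕜]
    (E : Submodule 𝕜 C(K, 𝕜)) (C : ℝ) : Prop :=
  ∀ f ∈ E, ∀ g ∈ E, sprInf f g ≤ C * ‖cmAbs f - cmAbs g‖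

/-- The closed unit ball of the dual of `E`, as a subset of the dual endowed with the
weak* topology. -/
def dualBallSet (E : Type*) [NormedAddCommGroup E] [NormedSpace ℂ E] :
    Set (WeakDual ℂ E) :=
  {φ : WeakDual ℂ E | ‖WeakDual.toStrongDual φ‖ ≤ 1}

/-- Banach–Alaoglu: the closed unit ball of the dual is weak* compact. -/
instance (E : Type*) [NormedAddCommGroup E] [NormedSpace ℂ E] :
    CompactSpace (dualBallSet E) := by
  apply isCompact_iff_compactSpace.mp
  have h := WeakDual.isCompact_closedBall (𝕜 := ℂ) (E := E) 0 1
  convert h using 1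
  ext φ
  simp [dualBallSet, Metric.mem_closedBall, dist_zero_right]

section DualBall

variable {𝕜 E : Type*} [RCLike 𝕜] [SeminormedAddCommGroup E] [NormedSpace 𝕜 E]

theorem norm_le_of_forall_dual_le {x : E} {M : ℝ}
    (h : ∀ f : StrongDual 𝕜 E, ‖f‖ ≤ 1 → ‖f x‖ ≤ M) : ‖x‖ ≤ M := by
  obtain ⟨f, hf, hfx⟩ := exists_dual_vector'' 𝕜 x
  simpa [hfx] using h f hf

theorem abs_norm_sub_norm_le_of_forall_dual {x y : E} {a : ℝ}
    (h : ∀ f : StrongDual 𝕜 E, ‖f‖ ≤ 1 → |‖f x‖ - ‖f y‖| ≤ a) : |‖x‖ - ‖y‖| ≤ a := by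
  have norm_le_add : ∀ u v : E, (∀ f : StrongDual 𝕜 E, ‖f‖ ≤ 1 → |‖f u‖ - ‖f v‖| ≤ a) →
      ‖u‖ ≤ ‖v‖ + a := fun u v h ↦ norm_le_of_forall_dual_le fun f hf ↦ by
    linarith [(abs_le.mp (h f hf)).2, f.le_of_opNorm_le hf v]
  rw [abs_sub_le_iff]
  constructor
  · linarith [norm_le_add x y h]
  · linarith [norm_le_add y x fun f hf ↦ abs_sub_comm ‖f x‖ ‖f y‖ ▸ h f hf]

theorem norm_mk_le_of_forall_dual {S : Submodule 𝕜 E} {x : E} {a : ℝ}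
    (h : ∀ f : StrongDual 𝕜 E, ‖f‖ ≤ 1 → (∀ y ∈ S, f y = 0) → ‖f x‖ ≤ a) :
    ‖(Submodule.Quotient.mk x : E ⧸ S)‖ ≤ a := by
  refine norm_le_of_forall_dual_le (𝕜 := 𝕜) fun g hg ↦ h (g.comp S.mkQL) ?_ ?_
  · refine ContinuousLinearMap.opNorm_le_bound _ zero_le_one fun z ↦ ?_
    calc ‖g (Submodule.Quotient.mk z)‖ ≤ 1 * ‖(Submodule.Quotient.mk z : E ⧸ S)‖ :=
          g.le_of_opNorm_le hg _
      _ ≤ 1 * ‖z‖ := by gcongr; exact Submodule.Quotient.norm_mk_le S z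
  · intro y hy
    simp [(Submodule.Quotient.mk_eq_zero S).mpr hy]

theorem exists_forall_norm_sub_smul_le (x y : E) :
    ∃ μ : 𝕜, ∀ ν : 𝕜, ‖x - μ • y‖ ≤ ‖x - ν • y‖ := by
  by_cases hy : ‖y‖ = 0
  · refine ⟨0, fun ν ↦ ?_⟩
    have hν : ‖ν • y‖ = 0 := by rw [norm_smul, hy, mul_zero]
    have := norm_sub_norm_le x (x - ν • y)
    rw [sub_sub_cancel, hν] at this
    rw [zero_smul, sub_zero]
    linarith
  have hy' : 0 < ‖y‖ := (norm_nonneg y).lt_of_ne' hy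
  refine Continuous.exists_forall_le (by fun_prop) <| Filter.tendsto_atTop_mono (fun ν ↦ ?_) <|
    Filter.tendsto_atTop_add_const_right _ (-‖x‖) (tendsto_norm_cocompact_atTop.atTop_mul_const hy')
  linarith [norm_sub_norm_le (ν • y) x, norm_sub_rev (ν • y) x, norm_smul ν y]

theorem exists_norm_sub_smul_le_of_forall_dual {x y : E} {a : ℝ}
    (h : ∀ f : StrongDual 𝕜 E, ‖f‖ ≤ 1 → f y = 0 → ‖f x‖ ≤ a) : ∃ μ : 𝕜, ‖x - μ • y‖ ≤ a := by
  obtain ⟨μ, hμ⟩ := exists_forall_norm_sub_smul_le (𝕜 := 𝕜) x y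
  refine ⟨μ, le_of_forall_pos_lt_add fun ε hε ↦ ?_⟩
  have hmk : ‖(Submodule.Quotient.mk x : E ⧸ 𝕜 ∙ y)‖ ≤ a :=
    norm_mk_le_of_forall_dual fun f hf hfy ↦ h f hf <| hfy y (Submodule.mem_span_singleton_self y)
  obtain ⟨m, hm, hmε⟩ := Submodule.Quotient.norm_mk_lt (Submodule.Quotient.mk x : E ⧸ 𝕜 ∙ y) hε
  obtain ⟨ν, hν⟩ := Submodule.mem_span_singleton.mp ((Submodule.Quotient.eq (𝕜 ∙ y)).mp hm.symm)
  calc ‖x - μ • y‖ ≤ ‖x - ν • y‖ := hμ ν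
    _ = ‖m‖ := by rw [hν, sub_sub_cancel]
    _ < a + ε := by linarith

theorem exists_norm_eq_one_norm_sub_eq (μ : 𝕜) : ∃ l : 𝕜, ‖l‖ = 1 ∧ ‖μ - l‖ = |‖μ‖ - 1| := by
  rcases eq_or_ne μ 0 with rfl | hμ
  · exact ⟨1, by simp, by simp⟩
  have hnorm : (‖μ‖ : 𝕜) ≠ 0 := by simpa using hμ
  refine ⟨μ / ‖μ‖, by simp [norm_div, hμ], ?_⟩
  have : μ - μ / ‖μ‖ = μ / ‖μ‖ * ((‖μ‖ - 1 : ℝ) : 𝕜) := by push_cast; field_simp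
  rw [this, norm_mul, norm_div, RCLike.norm_ofReal, RCLike.norm_ofReal, abs_norm,
    div_self (norm_ne_zero_iff.mpr hμ), one_mul]

theorem exists_norm_eq_one_norm_sub_smul_le (x y : E) (μ : 𝕜) :
    ∃ l : 𝕜, ‖l‖ = 1 ∧ ‖x - l • y‖ ≤ 2 * ‖x - μ • y‖ + |‖x‖ - ‖y‖| := by
  obtain ⟨l, hl, hμl⟩ := exists_norm_eq_one_norm_sub_eq μ
  refine ⟨l, hl, ?_⟩
  have hrot : ‖μ - l‖ * ‖y‖ ≤ ‖x - μ • y‖ + |‖x‖ - ‖y‖| :=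
    calc ‖μ - l‖ * ‖y‖ = |‖μ • y‖ - ‖y‖| := by
          rw [hμl, norm_smul, ← abs_of_nonneg (norm_nonneg y), ← abs_mul, abs_norm]; ring_nf
      _ ≤ |‖μ • y‖ - ‖x‖| + |‖x‖ - ‖y‖| := abs_sub_le _ _ _
      _ ≤ ‖x - μ • y‖ + |‖x‖ - ‖y‖| := by
          gcongr; rw [abs_sub_comm]; exact abs_norm_sub_norm_le x (μ • y)
  calc ‖x - l • y‖ = ‖(x - μ • y) + (μ - l) • y‖ := by rw [sub_smul]; abel_nf
    _ ≤ ‖x - μ • y‖ + ‖μ - l‖ * ‖y‖ := (norm_add_le _ _).trans_eq (by rw [norm_smul])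
    _ ≤ 2 * ‖x - μ • y‖ + |‖x‖ - ‖y‖| := by linarith

theorem exists_norm_eq_one_norm_sub_smul_le_of_forall_dual {x y : E} {a : ℝ}
    (h : ∀ f : StrongDual 𝕜 E, ‖f‖ ≤ 1 → |‖f x‖ - ‖f y‖| ≤ a) :
    ∃ l : 𝕜, ‖l‖ = 1 ∧ ‖x - l • y‖ ≤ 3 * a := by
  obtain ⟨μ, hμ⟩ := exists_norm_sub_smul_le_of_forall_dual (𝕜 := 𝕜) (x := x) (y := y) (a := a)
    fun f hf hfy ↦ by simpa [hfy] using h f hf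
  obtain ⟨l, hl, hxl⟩ := exists_norm_eq_one_norm_sub_smul_le x y μ
  exact ⟨l, hl, by linarith [abs_norm_sub_norm_le_of_forall_dual h]⟩

end DualBall

section ContinuousMap

variable {K 𝕜 : Type*} [TopologicalSpace K] [CompactSpace K] [RCLike 𝕜]

theorem abs_norm_sub_norm_le_norm_cmAbs_sub (f g : C(K, 𝕜)) (k : K) :
    |‖f k‖ - ‖g k‖| ≤ ‖cmAbs f - cmAbs g‖ :=
  ContinuousMap.norm_coe_le_norm (cmAbs f - cmAbs g) k

theorem sprInf_le_norm_sub_smul (f g : C(K, 𝕜)) {l : 𝕜} (hl : ‖l‖ = 1) :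
    sprInf f g ≤ ‖f - l • g‖ :=
  ciInf_le ⟨0, by rintro _ ⟨_, rfl⟩; exact norm_nonneg _⟩ (⟨l, hl⟩ : {c : 𝕜 // ‖c‖ = 1})

end ContinuousMap

section DualBallEval

variable {E : Type*} [NormedAddCommGroup E] [NormedSpace ℂ E]

def dualBallSet.ofStrongDual {f : StrongDual ℂ E} (hf : ‖f‖ ≤ 1) : dualBallSet E :=
  ⟨WeakDual.toStrongDual.symm f, hf⟩

def dualBallSet.eval (x : E) : C(dualBallSet E, ℂ) :=
  ⟨fun φ ↦ (φ : WeakDual ℂ E) x, (WeakDual.eval_continuous x).comp continuous_subtype_val⟩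

variable (E) in
def dualBallEval : E →ₗᵢ[ℂ] C(dualBallSet E, ℂ) where
  toFun := dualBallSet.eval
  map_add' x y := by ext; simp [dualBallSet.eval]
  map_smul' c x := by ext; simp [dualBallSet.eval]
  norm_map' x := le_antisymm
    ((ContinuousMap.norm_le _ (norm_nonneg x)).mpr fun φ ↦
      (WeakDual.toStrongDual φ.1).le_of_opNorm_le φ.2 x |>.trans_eq (one_mul _))
    (norm_le_of_forall_dual_le fun _ hf ↦
      ContinuousMap.norm_coe_le_norm (dualBallSet.eval x) (dualBallSet.ofStrongDual hf))

end DualBallEval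

theorem canonical_embedding_12SPR_general (E : Type*) [NormedAddCommGroup E] [NormedSpace ℂ E] :
    ∃ j : E →ₗᵢ[ℂ] C(dualBallSet E, ℂ),
      (∀ (x : E) (φ : dualBallSet E), j x φ = (φ.1 : WeakDual ℂ E) x) ∧
      DoesCSPR (LinearMap.range j.toLinearMap) 12 := by
  refine ⟨dualBallEval E, fun _ _ ↦ rfl, ?_⟩
  rintro _ ⟨x, rfl⟩ _ ⟨y, rfl⟩
  set a := ‖cmAbs (dualBallEval E x) - cmAbs (dualBallEval E y)‖
  obtain ⟨l, hl, hxy⟩ := exists_norm_eq_one_norm_sub_smul_le_of_forall_dual (a := a)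
    fun _ hf ↦ abs_norm_sub_norm_le_norm_cmAbs_sub (dualBallEval E x) (dualBallEval E y)
      (dualBallSet.ofStrongDual hf)
  calc sprInf (dualBallEval E x) (dualBallEval E y)
      ≤ ‖dualBallEval E x - l • dualBallEval E y‖ := sprInf_le_norm_sub_smul _ _ hl
    _ = ‖x - l • y‖ := by rw [← map_smul, ← map_sub, LinearIsometry.norm_map]
    _ ≤ 3 * a := hxy
    _ ≤ 12 * a := by linarith [norm_nonneg (cmAbs (dualBallEval E x) - cmAbs (dualBallEval E y))]

/-- For a complex Banach space `E`, the canonical evaluation map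
`j : E → C(B_{E*})` (with `B_{E*}` the weak*-compact closed unit ball of the dual) is a linear
isometric embedding whose range does `12`-SPR. -/
theorem canonical_embedding_12SPR (E : Type*) [NormedAddCommGroup E] [NormedSpace ℂ E]
    [CompleteSpace E] :
    ∃ j : E →ₗᵢ[ℂ] C(dualBallSet E, ℂ),
      (∀ (x : E) (φ : dualBallSet E), j x φ = (φ.1 : WeakDual ℂ E) x) ∧
      DoesCSPR (LinearMap.range j.toLinearMap) 12 :=
  canonical_embedding_12SPR_general E

end
end

section
/- Let K be a compact Hausdorff space whose derived set K′ is finite, and let the scalar field be 𝕜 ∈ {ℝ, ℂ}. Then for every infinite-dimensional linear subspace E of C(K) and every ε > 0 there exist f, g ∈ E with ‖f‖ = ‖g‖ = 1 and ‖min(|f|, |g|)‖ ≤ ε (the minimum taken pointwise of the moduli). Consequently, no infinite-dimensional subspace of C(K) does SPR. -/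
open scoped ZeroAtInfty

noncomputable section

/-- A subspace `E ⊆ C(K, 𝕜)` does stable phase retrieval. -/
def DoesSPR {K : Type*} [TopologicalSpace K] [CompactSpace K] {𝕜 : Type*} [RCLike 𝕜]
    (E : Submodule 𝕜 C(K, 𝕜)) : Prop :=
  ∃ C : ℝ, 1 ≤ C ∧ DoesCSPR E C

/-!
If `f` vanishes on the finite set `K′`, then `{x | ε ≤ ‖f x‖}` is a compact set of isolated
points, hence finite; an infinite-dimensional `E` contains normalized functions vanishing on any
finite set, so taking `f` vanishing on `K′` and then `g` vanishing where `‖f‖ ≥ ε` gives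
`‖|f| ⊓ |g|‖ ≤ ε`. For such `f, g` the moduli of `f + g` and `f - g` differ by at most `2ε`, while
for every unimodular `λ` the function `(f + g) - λ (f - g) = (1 - λ) f + (1 + λ) g` is roughly
`‖1 - λ‖` at a peak of `f` and `‖1 + λ‖` at a peak of `g`, and one of these is at least `1`.
So stable phase retrieval fails for the pair `f + g, f - g` once `ε` is small.
-/

open Set

theorem IsCompact.finite_of_disjoint_derivedSet {X : Type*} [TopologicalSpace X] {s : Set X}
    (hs : IsCompact s) (hd : Disjoint s (derivedSet s)) : s.Finite := by
  by_contra hinf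
  obtain ⟨z, hz, hacc⟩ := exists_nhds_ne_inf_principal_neBot hs hinf
  exact hd.ne_of_mem hz hacc rfl

theorem Submodule.exists_ne_zero_forall_eq_zero_of_not_finiteDimensional {K 𝕜 : Type*}
    [TopologicalSpace K] [Field 𝕜] [TopologicalSpace 𝕜] [IsTopologicalRing 𝕜]
    {E : Submodule 𝕜 C(K, 𝕜)} (hE : ¬FiniteDimensional 𝕜 E) {T : Set K} (hT : T.Finite) :
    ∃ f ∈ E, f ≠ 0 ∧ ∀ x ∈ T, f x = 0 := by
  by_contra! hcon
  have : Finite T := hT.to_subtype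
  let restrict : E →ₗ[𝕜] (T → 𝕜) :=
    { toFun := fun f x => (f : C(K, 𝕜)) x
      map_add' := fun _ _ => rfl
      map_smul' := fun _ _ => rfl }
  refine hE (Module.Finite.of_injective restrict ?_)
  rw [← LinearMap.ker_eq_bot, LinearMap.ker_eq_bot']
  intro f hf
  by_contra hf0
  obtain ⟨x, hxT, hx⟩ := hcon f f.2 (by simpa using hf0)
  exact hx (congrFun hf ⟨x, hxT⟩)

theorem abs_norm_add_sub_norm_sub_le {G : Type*} [SeminormedAddCommGroup G] (a b : G) :
    |‖a + b‖ - ‖a - b‖| ≤ 2 * min ‖a‖ ‖b‖ := by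
  rw [mul_min_of_nonneg _ _ zero_le_two]
  refine le_min ?_ ?_
  · calc |‖a + b‖ - ‖a - b‖| = |‖a + b‖ - ‖b - a‖| := by rw [norm_sub_rev]
      _ ≤ ‖(a + b) - (b - a)‖ := abs_norm_sub_norm_le _ _
      _ = ‖a + a‖ := by abel_nf
      _ ≤ 2 * ‖a‖ := (norm_add_le _ _).trans_eq (two_mul _).symm
  · calc |‖a + b‖ - ‖a - b‖| ≤ ‖(a + b) - (a - b)‖ := abs_norm_sub_norm_le _ _
      _ = ‖b + b‖ := by abel_nf
      _ ≤ 2 * ‖b‖ := (norm_add_le _ _).trans_eq (two_mul _).symm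

theorem ContinuousMap.exists_norm_apply_eq_norm {K E : Type*} [TopologicalSpace K]
    [CompactSpace K] [SeminormedAddCommGroup E] {f : C(K, E)} (hf : f ≠ 0) :
    ∃ x, ‖f x‖ = ‖f‖ := by
  obtain ⟨x₀, -⟩ := DFunLike.ne_iff.mp hf
  obtain ⟨x, -, hx⟩ := isCompact_univ.exists_isMaxOn ⟨x₀, mem_univ x₀⟩
    (map_continuous f).norm.continuousOn
  exact ⟨x, le_antisymm (f.norm_coe_le_norm x)
    ((f.norm_le (norm_nonneg _)).2 fun y => hx (mem_univ y))⟩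

section PhaseRetrieval

variable {K 𝕜 : Type*} [TopologicalSpace K] [RCLike 𝕜]

@[simp] theorem cmAbs_apply (f : C(K, 𝕜)) (x : K) : cmAbs f x = ‖f x‖ := rfl

variable [CompactSpace K]

theorem Submodule.exists_norm_eq_one_forall_eq_zero {E : Submodule 𝕜 C(K, 𝕜)}
    (hE : ¬FiniteDimensional 𝕜 E) {T : Set K} (hT : T.Finite) :
    ∃ f ∈ E, ‖f‖ = 1 ∧ ∀ x ∈ T, f x = 0 := by
  obtain ⟨f, hfE, hf0, hfT⟩ := exists_ne_zero_forall_eq_zero_of_not_finiteDimensional hE hT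
  refine ⟨(‖f‖⁻¹ : 𝕜) • f, E.smul_mem _ hfE, norm_smul_inv_norm hf0, fun x hx => ?_⟩
  simp [hfT x hx]

theorem norm_cmAbs_inf_le_iff {f g : C(K, 𝕜)} {ε : ℝ} (hε : 0 ≤ ε) :
    ‖cmAbs f ⊓ cmAbs g‖ ≤ ε ↔ ∀ x, min ‖f x‖ ‖g x‖ ≤ ε := by
  rw [ContinuousMap.norm_le _ hε]
  refine forall_congr' fun x => ?_
  rw [ContinuousMap.inf_apply, cmAbs_apply, cmAbs_apply, Real.norm_of_nonneg (by positivity)]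

theorem min_norm_le_norm_cmAbs_inf (f g : C(K, 𝕜)) (x : K) :
    min ‖f x‖ ‖g x‖ ≤ ‖cmAbs f ⊓ cmAbs g‖ :=
  (norm_cmAbs_inf_le_iff (norm_nonneg _)).1 le_rfl x

theorem exists_norm_eq_one_norm_cmAbs_inf_le (hK : (derivedSet (univ : Set K)).Finite)
    {E : Submodule 𝕜 C(K, 𝕜)} (hE : ¬FiniteDimensional 𝕜 E) {ε : ℝ} (hε : 0 < ε) :
    ∃ f ∈ E, ∃ g ∈ E, ‖f‖ = 1 ∧ ‖g‖ = 1 ∧ ‖cmAbs f ⊓ cmAbs g‖ ≤ ε := by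
  obtain ⟨f, hfE, hf, hf0⟩ := E.exists_norm_eq_one_forall_eq_zero hE hK
  have hlarge : {x | ε ≤ ‖f x‖}.Finite := by
    refine (isClosed_le continuous_const (map_continuous f).norm).isCompact
      |>.finite_of_disjoint_derivedSet (disjoint_left.2 fun x (hx : ε ≤ ‖f x‖) hx' => ?_)
    rw [hf0 x (derivedSet_mono _ _ (subset_univ _) hx'), norm_zero] at hx
    linarith
  obtain ⟨g, hgE, hg, hg0⟩ := E.exists_norm_eq_one_forall_eq_zero hE hlarge
  refine ⟨f, hfE, g, hgE, hf, hg, (norm_cmAbs_inf_le_iff hε.le).2 fun x => ?_⟩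
  by_cases hx : ε ≤ ‖f x‖
  · simpa [hg0 x hx] using hε.le
  · exact (min_le_left _ _).trans (not_le.1 hx).le

theorem norm_cmAbs_add_sub_cmAbs_sub_le (f g : C(K, 𝕜)) :
    ‖cmAbs (f + g) - cmAbs (f - g)‖ ≤ 2 * ‖cmAbs f ⊓ cmAbs g‖ := by
  refine (ContinuousMap.norm_le _ (by positivity)).2 fun x => ?_
  simpa using (abs_norm_add_sub_norm_sub_le (f x) (g x)).trans
    (mul_le_mul_of_nonneg_left (min_norm_le_norm_cmAbs_inf f g x) zero_le_two)

theorem norm_one_sub_sub_le_norm_add_sub_smul_sub {f g : C(K, 𝕜)} (hf : ‖f‖ = 1)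
    (hg : ‖g‖ = 1) {l : 𝕜} (hl : ‖l‖ = 1) :
    ‖1 - l‖ - 2 * ‖cmAbs f ⊓ cmAbs g‖ ≤ ‖f + g - l • (f - g)‖ := by
  obtain ⟨x, hx⟩ := ContinuousMap.exists_norm_apply_eq_norm (f := f) (by rintro rfl; simp at hf)
  rw [hf] at hx
  have hgx : ‖g x‖ ≤ ‖cmAbs f ⊓ cmAbs g‖ := by
    simpa [hx, hg ▸ g.norm_coe_le_norm x] using min_norm_le_norm_cmAbs_inf f g x
  have hl' : ‖1 + l‖ ≤ 2 := (norm_add_le _ _).trans (by norm_num [hl])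
  calc ‖1 - l‖ - 2 * ‖cmAbs f ⊓ cmAbs g‖ ≤ ‖(1 - l) * f x‖ - ‖(1 + l) * g x‖ := by
        rw [norm_mul, norm_mul, hx, mul_one]
        gcongr
    _ ≤ ‖(1 - l) * f x + (1 + l) * g x‖ := norm_sub_le_norm_add _ _
    _ = ‖(f + g - l • (f - g)) x‖ := by simp only [ContinuousMap.sub_apply,
        ContinuousMap.add_apply, ContinuousMap.smul_apply, smul_eq_mul]; ring_nf
    _ ≤ ‖f + g - l • (f - g)‖ := ContinuousMap.norm_coe_le_norm _ _

theorem one_sub_two_mul_le_sprInf {f g : C(K, 𝕜)} (hf : ‖f‖ = 1) (hg : ‖g‖ = 1) :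
    1 - 2 * ‖cmAbs f ⊓ cmAbs g‖ ≤ sprInf (f + g) (f - g) := by
  have : Nonempty {c : 𝕜 // ‖c‖ = 1} := ⟨⟨1, norm_one⟩⟩
  refine le_ciInf fun ⟨l, hl⟩ => ?_
  have hpeak_f := norm_one_sub_sub_le_norm_add_sub_smul_sub hf hg hl
  have hpeak_g := norm_one_sub_sub_le_norm_add_sub_smul_sub hg hf (l := -l) (by simpa using hl)
  rw [inf_comm, sub_neg_eq_add,
    show g + f - -l • (g - f) = f + g - l • (f - g) by module] at hpeak_g
  have htwo : ‖(2 : 𝕜)‖ ≤ ‖1 - l‖ + ‖1 + l‖ := by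
    simpa [show (1 - l) + (1 + l) = (2 : 𝕜) by ring] using norm_add_le (1 - l) (1 + l)
  rw [RCLike.norm_two] at htwo
  linarith

theorem DoesCSPR.one_le_mul_norm_cmAbs_inf {E : Submodule 𝕜 C(K, 𝕜)} {C : ℝ}
    (hE : DoesCSPR E C) (hC : 0 ≤ C) {f g : C(K, 𝕜)} (hfE : f ∈ E) (hgE : g ∈ E)
    (hf : ‖f‖ = 1) (hg : ‖g‖ = 1) : 1 ≤ 2 * (C + 1) * ‖cmAbs f ⊓ cmAbs g‖ := by
  have hspr := hE _ (E.add_mem hfE hgE) _ (E.sub_mem hfE hgE)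
  have hlow := one_sub_two_mul_le_sprInf hf hg
  have hup := mul_le_mul_of_nonneg_left (norm_cmAbs_add_sub_cmAbs_sub_le f g) hC
  linarith

end PhaseRetrieval

theorem no_SPR_of_finite_derived_set_general {𝕜 : Type*} [RCLike 𝕜]
    {K : Type*} [TopologicalSpace K] [CompactSpace K]
    (hfin : (derivedSet (Set.univ : Set K)).Finite) :
    (∀ E : Submodule 𝕜 C(K, 𝕜), ¬FiniteDimensional 𝕜 E →
      ∀ ε : ℝ, 0 < ε → ∃ f ∈ E, ∃ g ∈ E,
        ‖f‖ = 1 ∧ ‖g‖ = 1 ∧ ‖cmAbs f ⊓ cmAbs g‖ ≤ ε) ∧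
    ∀ E : Submodule 𝕜 C(K, 𝕜), ¬FiniteDimensional 𝕜 E → ¬DoesSPR E := by
  refine ⟨fun E hE ε hε => exists_norm_eq_one_norm_cmAbs_inf_le hfin hE hε, ?_⟩
  rintro E hE ⟨C, hC, hspr⟩
  have hC' : 0 < C + 1 := by linarith
  obtain ⟨f, hfE, g, hgE, hf, hg, hfg⟩ :=
    exists_norm_eq_one_norm_cmAbs_inf_le hfin hE (ε := 1 / (4 * (C + 1))) (by positivity)
  have hone := hspr.one_le_mul_norm_cmAbs_inf (by linarith) hfE hgE hf hg
  have hhalf : 2 * (C + 1) * ‖cmAbs f ⊓ cmAbs g‖ ≤ 1 / 2 :=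
    calc 2 * (C + 1) * ‖cmAbs f ⊓ cmAbs g‖ ≤ 2 * (C + 1) * (1 / (4 * (C + 1))) := by gcongr
      _ = 1 / 2 := by field_simp; ring
  linarith

/-- If `K` is a compact Hausdorff space whose derived set is finite, with
scalars `𝕜 ∈ {ℝ, ℂ}`, then every infinite-dimensional subspace `E` of `C(K)` contains, for
every `ε > 0`, normalized `f, g` with `‖|f| ⊓ |g|‖ ≤ ε`; consequently no infinite-dimensional
subspace of `C(K)` does SPR. -/
theorem no_SPR_of_finite_derived_set {𝕜 : Type*} [RCLike 𝕜]
    {K : Type*} [TopologicalSpace K] [CompactSpace K] [T2Space K]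
    (hfin : (derivedSet (Set.univ : Set K)).Finite) :
    (∀ E : Submodule 𝕜 C(K, 𝕜), ¬FiniteDimensional 𝕜 E →
      ∀ ε : ℝ, 0 < ε → ∃ f ∈ E, ∃ g ∈ E,
        ‖f‖ = 1 ∧ ‖g‖ = 1 ∧ ‖cmAbs f ⊓ cmAbs g‖ ≤ ε) ∧
    ∀ E : Submodule 𝕜 C(K, 𝕜), ¬FiniteDimensional 𝕜 E → ¬DoesSPR E :=
  no_SPR_of_finite_derived_set_general hfin

end
end

section
/- Let K, L be compact Hausdorff spaces, 𝕜 ∈ {ℝ, ℂ}, and let T : C(L) → C(K) be a bounded linear operator with the property that for every t ∈ L there exists s_t ∈ K such that Tf(s_t) = f(t) for every f ∈ C(L). Then, for every subspace E of C(L) that does SPR, the image T(E) is a subspace of C(K) that does SPR. -/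
open scoped ZeroAtInfty

noncomputable section

/-!
Boundedness of `T` gives `inf_λ ‖Tu - λ Tv‖ ≤ ‖T‖ inf_λ ‖u - λ v‖`, while evaluating `Tu`, `Tv` at
`s_t` recovers `|u(t)| - |v(t)|`, so `‖|u| - |v|‖ ≤ ‖|Tu| - |Tv|‖`. Together, `C`-SPR of `E`
yields `C ‖T‖`-SPR of `T(E)`.
-/

theorem DoesCSPR.mono {K : Type*} [TopologicalSpace K] [CompactSpace K] {𝕜 : Type*} [RCLike 𝕜]
    {E : Submodule 𝕜 C(K, 𝕜)} {C C' : ℝ} (hE : DoesCSPR E C) (hCC' : C ≤ C') :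
    DoesCSPR E C' := fun f hf g hg =>
  (hE f hf g hg).trans (mul_le_mul_of_nonneg_right hCC' (norm_nonneg _))

theorem sprInf_map_le {K L : Type*} [TopologicalSpace K] [CompactSpace K]
    [TopologicalSpace L] [CompactSpace L] {𝕜 : Type*} [RCLike 𝕜]
    (T : C(L, 𝕜) →L[𝕜] C(K, 𝕜)) (u v : C(L, 𝕜)) :
    sprInf (T u) (T v) ≤ ‖T‖ * sprInf u v := by
  rw [sprInf, sprInf, Real.mul_iInf_of_nonneg (norm_nonneg T)]
  refine ciInf_mono ⟨0, ?_⟩ fun l => ?_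
  · rintro _ ⟨l, rfl⟩
    positivity
  · calc ‖T u - (l : 𝕜) • T v‖ = ‖T (u - (l : 𝕜) • v)‖ := by rw [map_sub, map_smul]
      _ ≤ ‖T‖ * ‖u - (l : 𝕜) • v‖ := T.le_opNorm _

theorem norm_cmAbs_sub_le_of_forall_exists_apply_eq {K L : Type*} [TopologicalSpace K]
    [CompactSpace K] [TopologicalSpace L] [CompactSpace L] {𝕜 : Type*} [RCLike 𝕜]
    (T : C(L, 𝕜) → C(K, 𝕜)) (hT : ∀ t : L, ∃ s : K, ∀ f : C(L, 𝕜), T f s = f t)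
    (u v : C(L, 𝕜)) :
    ‖cmAbs u - cmAbs v‖ ≤ ‖cmAbs (T u) - cmAbs (T v)‖ := by
  refine (ContinuousMap.norm_le _ (norm_nonneg _)).2 fun t => ?_
  obtain ⟨s, hs⟩ := hT t
  have hst : (cmAbs u - cmAbs v) t = (cmAbs (T u) - cmAbs (T v)) s := by
    simp [cmAbs, hs u, hs v]
  exact hst ▸ ContinuousMap.norm_coe_le_norm _ s

theorem DoesCSPR.map {K L : Type*} [TopologicalSpace K] [CompactSpace K]
    [TopologicalSpace L] [CompactSpace L] {𝕜 : Type*} [RCLike 𝕜]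
    {E : Submodule 𝕜 C(L, 𝕜)} {C : ℝ} (hE : DoesCSPR E C) (hC : 0 ≤ C)
    (T : C(L, 𝕜) →L[𝕜] C(K, 𝕜)) (hT : ∀ t : L, ∃ s : K, ∀ f : C(L, 𝕜), T f s = f t) :
    DoesCSPR (E.map (T : C(L, 𝕜) →ₗ[𝕜] C(K, 𝕜))) (‖T‖ * C) := by
  rintro _ ⟨u, hu, rfl⟩ _ ⟨v, hv, rfl⟩
  calc sprInf (T u) (T v) ≤ ‖T‖ * sprInf u v := sprInf_map_le T u v
    _ ≤ ‖T‖ * (C * ‖cmAbs u - cmAbs v‖) := by gcongr; exact hE u hu v hv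
    _ ≤ ‖T‖ * (C * ‖cmAbs (T u) - cmAbs (T v)‖) := by
      gcongr; exact norm_cmAbs_sub_le_of_forall_exists_apply_eq T hT u v
    _ = ‖T‖ * C * ‖cmAbs (T u) - cmAbs (T v)‖ := by ring

theorem pointwise_section_preserves_SPR_general {𝕜 : Type*} [RCLike 𝕜]
    {K L : Type*} [TopologicalSpace K] [CompactSpace K]
    [TopologicalSpace L] [CompactSpace L]
    (T : C(L, 𝕜) →L[𝕜] C(K, 𝕜))
    (hT : ∀ t : L, ∃ s : K, ∀ f : C(L, 𝕜), T f s = f t)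
    (E : Submodule 𝕜 C(L, 𝕜)) (hE : DoesSPR E) :
    DoesSPR (E.map (T : C(L, 𝕜) →ₗ[𝕜] C(K, 𝕜))) := by
  obtain ⟨C, hC, hCSPR⟩ := hE
  refine ⟨max ‖T‖ 1 * C, one_le_mul_of_one_le_of_one_le (le_max_right _ _) hC, ?_⟩
  exact (hCSPR.map (zero_le_one.trans hC) T hT).mono
    (mul_le_mul_of_nonneg_right (le_max_left _ _) (zero_le_one.trans hC))

/-- Let `K, L` be compact Hausdorff spaces, `𝕜 ∈ {ℝ, ℂ}`, and
`T : C(L) → C(K)` a bounded linear operator such that for every `t ∈ L` there is `s_t ∈ K` with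
`Tf s_t = f t` for all `f`. Then `T` maps SPR subspaces of `C(L)` to SPR subspaces of `C(K)`. -/
theorem pointwise_section_preserves_SPR {𝕜 : Type*} [RCLike 𝕜]
    {K L : Type*} [TopologicalSpace K] [CompactSpace K] [T2Space K]
    [TopologicalSpace L] [CompactSpace L] [T2Space L]
    (T : C(L, 𝕜) →L[𝕜] C(K, 𝕜))
    (hT : ∀ t : L, ∃ s : K, ∀ f : C(L, 𝕜), T f s = f t)
    (E : Submodule 𝕜 C(L, 𝕜)) (hE : DoesSPR E) :
    DoesSPR (E.map (T : C(L, 𝕜) →ₗ[𝕜] C(K, 𝕜))) :=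
  pointwise_section_preserves_SPR_general T hT E hE

end
end

section
/- Let α < ω₁ be a countable ordinal, let K be a compact Hausdorff space with K^(α) ≠ ∅, and let the scalar field be 𝕜 ∈ {ℝ, ℂ}. Then there exists a linear isometric embedding T : C([1, ω^α]) → C(K) which is positive (if f ≥ 0 pointwise then Tf ≥ 0 pointwise), satisfies T(1) = 1 (T preserves the constant function 1), and has the property that for every t ∈ [1, ω^α] there exists s_t ∈ K with Tf(s_t) = f(t) for every f ∈ C([1, ω^α]). -/
open scoped ZeroAtInfty

noncomputable section

/-- Ordinal intervals `[a, b]` (with the order topology of the ordinals) are compact spaces. -/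
instance ordIccCompact (a b : Ordinal.{0}) : CompactSpace (Set.Icc a b) :=
  isCompact_iff_compactSpace.mp isCompact_Icc

/-- The Cantor–Bendixson derivatives of a topological space: `cbDeriv K 0 = K`,
`cbDeriv K (o+1)` is the derived set (set of accumulation points) of `cbDeriv K o`, and at
limit ordinals one takes intersections. -/
def cbDeriv (K : Type*) [TopologicalSpace K] (o : Ordinal.{0}) : Set K :=
  Ordinal.limitRecOn o Set.univ (fun _ ih => derivedSet ih)
    (fun o _ ih => ⋂ b : Set.Iio o, ih b b.2)

/-! By induction on `α`: for every `s ∈ K^(α)` and open `U ∋ s` there is a positive unital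
contraction `T : C([1, ω ^ α]) → C(K)` each of whose point evaluations `f ↦ f t` is an evaluation
`f ↦ T f x` at some `x ∈ U`; such a `T` is isometric.

For `α ≠ 0`, `[1, ω ^ α]` is its top point together with countably many blocks
`[1, ω ^ g n]`, `g n < α`, converging to it. As `s` accumulates at every `K^(g n)`, there are
points `x n ∈ K^(g n)` with pairwise disjoint neighbourhoods `V n ⊆ U \ {s}`, and the induction
hypothesis gives operators `T n` for the blocks, realised near `x n`. With Urysohn bumps `φ n`
supported in `V n`, put `T f = f(ω ^ α) + ∑ φ n • (T n (f|block n) - f(ω ^ α))`. The series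
converges uniformly because `f` is continuous at `ω ^ α`, and each value of `T f` is a convex
combination of `f(ω ^ α)` and a value of some `T n (f|block n)`, which gives positivity and
contractivity. -/

open Ordinal Set Topology Filter Function
open scoped ComplexOrder

local notation "𝕀 " α:max => Set.Icc 1 (Ordinal.omega0 ^ α)

section CantorBendixson

variable {K : Type*} [TopologicalSpace K]

theorem cbDeriv_zero : cbDeriv K 0 = Set.univ := limitRecOn_zero ..

theorem cbDeriv_add_one (o : Ordinal.{0}) :
    cbDeriv K (o + 1) = derivedSet (cbDeriv K o) := limitRecOn_add_one ..

theorem cbDeriv_limit {o : Ordinal.{0}} (h : Order.IsSuccLimit o) :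
    cbDeriv K o = ⋂ b : Iio o, cbDeriv K b := limitRecOn_limit _ _ _ _ h

variable [T1Space K]

theorem isClosed_cbDeriv (o : Ordinal.{0}) : IsClosed (cbDeriv K o) := by
  induction o using Ordinal.limitRecOn with
  | zero => simp [cbDeriv_zero]
  | add_one o _ => rw [cbDeriv_add_one]; exact isClosed_derivedSet _
  | limit o h IH => simpa [cbDeriv_limit h] using isClosed_iInter fun b : Iio o => IH b b.2

theorem cbDeriv_add_one_subset (o : Ordinal.{0}) : cbDeriv K (o + 1) ⊆ cbDeriv K o := by
  rw [cbDeriv_add_one]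
  exact (derivedSet_subset_closure _).trans (isClosed_cbDeriv o).closure_subset

theorem cbDeriv_antitone : Antitone (cbDeriv K : Ordinal.{0} → Set K) := by
  intro a b hab
  induction b using Ordinal.limitRecOn with
  | zero => rw [nonpos_iff_eq_zero.1 hab]
  | add_one b IH =>
    rcases hab.eq_or_lt with rfl | hlt
    · exact subset_rfl
    · exact (cbDeriv_add_one_subset b).trans (IH (Order.lt_add_one_iff.1 hlt))
  | limit b h IH =>
    rcases hab.eq_or_lt with rfl | hlt
    · exact subset_rfl
    · rw [cbDeriv_limit h]
      exact iInter_subset (fun c : Iio b => cbDeriv K c) ⟨a, hlt⟩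

theorem mem_derivedSet_of_mem_cbDeriv {α β : Ordinal.{0}} (hβ : β < α) {s : K}
    (hs : s ∈ cbDeriv K α) : s ∈ derivedSet (cbDeriv K β) :=
  cbDeriv_add_one (K := K) β ▸ cbDeriv_antitone (Order.add_one_le_of_lt hβ) hs

end CantorBendixson

section Blocks

def blockStart (g : ℕ → Ordinal.{0}) : ℕ → Ordinal.{0}
  | 0 => 0
  | n + 1 => blockStart g n + ω ^ g n

variable {α : Ordinal.{0}} {g : ℕ → Ordinal.{0}}

theorem blockStart_strictMono (g : ℕ → Ordinal.{0}) : StrictMono (blockStart g) :=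
  strictMono_nat_of_lt_succ fun _ => lt_add_of_pos_right _ (opow_pos _ omega0_pos)

theorem blockStart_lt (hg : ∀ n, g n < α) (n : ℕ) : blockStart g n < ω ^ α := by
  induction n with
  | zero => exact opow_pos α omega0_pos
  | succ n IH =>
    exact isPrincipal_add_omega0_opow α IH ((opow_lt_opow_iff_right one_lt_omega0).2 (hg n))

theorem blockStart_const (β : Ordinal.{0}) (n : ℕ) :
    blockStart (fun _ => β) n = ω ^ β * n := by
  induction n with
  | zero => simp [blockStart]
  | succ n IH => rw [blockStart, IH, Nat.cast_succ, mul_add_one]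

/-- For `α = β + 1` take `g` constant `β`; for a limit `α`, let `g` enumerate the countable set
`Iio α`. -/
theorem exists_blockStart_cofinal (h0 : α ≠ 0) (hα : α.card ≤ Cardinal.aleph0) :
    ∃ g : ℕ → Ordinal.{0}, (∀ n, g n < α) ∧ ∀ δ < ω ^ α, ∃ n, δ < blockStart g n := by
  rcases zero_or_succ_or_isSuccLimit α with h | ⟨β, rfl⟩ | hl
  · exact absurd h h0
  · refine ⟨fun _ => β, fun _ => Order.lt_succ β, fun δ hδ => ?_⟩
    rw [Order.succ_eq_add_one, opow_add, opow_one] at hδ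
    obtain ⟨c, hc, hδc⟩ := (lt_mul_iff_of_isSuccLimit isSuccLimit_omega0).1 hδ
    obtain ⟨n, rfl⟩ := lt_omega0.1 hc
    exact ⟨n, blockStart_const β n ▸ hδc⟩
  · have hcount : (Iio α).Countable := by
      rw [← Cardinal.le_aleph0_iff_set_countable, Cardinal.mk_Iio_ordinal]
      exact Cardinal.lift_le_aleph0.2 hα
    obtain ⟨g, hg⟩ := hcount.exists_eq_range ⟨0, pos_iff_ne_zero.2 h0⟩
    refine ⟨g, fun n => (hg ▸ mem_range_self n : g n ∈ Iio α), fun δ hδ => ?_⟩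
    obtain ⟨c, hc, hδc⟩ := (lt_opow_of_isSuccLimit omega0_ne_zero hl).1 hδ
    obtain ⟨n, rfl⟩ : c ∈ range g := hg ▸ hc
    exact ⟨n + 1, hδc.trans_le le_add_self⟩

def Ordinal.addLeftIcc {γ δ T : Ordinal.{0}} (h : γ + δ ≤ T) :
    C(Icc 1 δ, Icc (1 : Ordinal.{0}) T) where
  toFun u := ⟨γ + u, u.2.1.trans le_add_self, (add_le_add_right u.2.2 γ).trans h⟩
  continuous_toFun :=
    ((Order.isNormal_iff_strictMono_and_continuous.1 (isNormal_add_right γ)).2.comp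
      continuous_subtype_val).subtype_mk _

def topPt (α : Ordinal.{0}) : 𝕀 α :=
  ⟨ω ^ α, Order.one_le_iff_pos.2 (opow_pos α omega0_pos), le_rfl⟩

def blockMap (hg : ∀ n, g n < α) (n : ℕ) : C(𝕀 (g n), 𝕀 α) :=
  Ordinal.addLeftIcc (blockStart_lt hg (n + 1)).le

theorem exists_blockMap_eq (hg : ∀ n, g n < α)
    (hcof : ∀ δ < ω ^ α, ∃ n, δ < blockStart g n) {t : 𝕀 α} (ht : t ≠ topPt α) :
    ∃ n u, blockMap hg n u = t := by
  have hex : ∃ m, (t : Ordinal.{0}) ≤ blockStart g m := by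
    obtain ⟨m, hm⟩ := hcof t (lt_of_le_of_ne t.2.2 fun h => ht (Subtype.ext h))
    exact ⟨m, hm.le⟩
  obtain ⟨n, hn⟩ : ∃ n, Nat.find hex = n + 1 := by
    refine Nat.exists_eq_add_one.2 (Nat.pos_of_ne_zero fun h => ?_)
    have := h ▸ Nat.find_spec hex
    exact (t.2.1.trans this).not_gt zero_lt_one
  have hlt : blockStart g n < t := not_le.1 (Nat.find_min hex (by omega))
  refine ⟨n, ⟨t - blockStart g n, ?_, ?_⟩, Subtype.ext (Ordinal.add_sub_cancel_of_le hlt.le)⟩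
  · exact Order.one_le_iff_ne_zero.2 (Ordinal.sub_ne_zero_iff_lt.2 hlt)
  · exact Ordinal.sub_le.2 (hn ▸ Nat.find_spec hex :)

/-- Since `ω ^ α` is a limit, its neighbourhoods contain final segments, which contain all late
blocks. -/
theorem eventually_range_blockMap_subset (hg : ∀ n, g n < α) (h0 : α ≠ 0)
    (hcof : ∀ δ < ω ^ α, ∃ n, δ < blockStart g n) {N : Set (𝕀 α)} (hN : N ∈ 𝓝 (topPt α)) :
    ∀ᶠ n in atTop, range (blockMap hg n) ⊆ N := by
  obtain ⟨O, hO, hON⟩ := (mem_nhds_subtype _ _ _).1 hN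
  have hlim : Order.IsSuccLimit (ω ^ α) := isSuccLimit_opow_left isSuccLimit_omega0 h0
  obtain ⟨c, hc, hcO⟩ := exists_Ioc_subset_of_mem_nhds' hO hlim.bot_lt
  obtain ⟨m, hm⟩ := hcof c hc.2
  filter_upwards [eventually_ge_atTop m] with n hn
  rintro _ ⟨u, rfl⟩
  refine hON (hcO ⟨?_, (blockMap hg n u).2.2⟩)
  calc c < blockStart g m := hm
    _ ≤ blockStart g n := (blockStart_strictMono g).monotone hn
    _ < blockStart g n + u := lt_add_of_pos_right _ (zero_lt_one.trans_le u.2.1)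

end Blocks

section Separation

variable {K : Type*} [TopologicalSpace K]

theorem exists_mem_isOpen_closure_subset_diff [T3Space K] {s : K} {W A : Set K} (hW : IsOpen W)
    (hsW : s ∈ W) (hs : s ∈ derivedSet A) :
    ∃ x ∈ A, ∃ V, IsOpen V ∧ x ∈ V ∧ closure V ⊆ W \ {s} := by
  obtain ⟨x, ⟨hxW, hxA⟩, hxs⟩ := accPt_iff_nhds.1 (mem_derivedSet.1 hs) W (hW.mem_nhds hsW)
  obtain ⟨V, ⟨hxV, hVo⟩, hVW⟩ := (hasBasis_opens_closure x).mem_iff.1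
    ((hW.sdiff isClosed_singleton).mem_nhds ⟨hxW, hxs⟩)
  exact ⟨x, hxA, V, hVo, hxV, hVW⟩

/-- Each `V n` is cut out of what is left of `U` once the closures of the earlier ones are
removed; `s` is still an accumulation point of `A n` there. -/
theorem exists_pairwise_disjoint_isOpen_seq [T3Space K] {s : K} {U : Set K} (hU : IsOpen U)
    (hsU : s ∈ U) {A : ℕ → Set K} (hA : ∀ n, s ∈ derivedSet (A n)) :
    ∃ (x : ℕ → K) (V : ℕ → Set K), (∀ n, x n ∈ A n) ∧ (∀ n, x n ∈ V n) ∧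
      (∀ n, IsOpen (V n)) ∧ (∀ n, V n ⊆ U \ {s}) ∧ Pairwise (Disjoint on V) := by
  let Nbhd := {W : Set K // IsOpen W ∧ s ∈ W}
  choose x hxA V hVo hxV hVW using fun (n : ℕ) (W : Nbhd) =>
    exists_mem_isOpen_closure_subset_diff W.2.1 W.2.2 (hA n)
  let next (n : ℕ) (W : Nbhd) : Nbhd :=
    ⟨W.1 \ closure (V n W), W.2.1.sdiff isClosed_closure, W.2.2, fun h => (hVW n W h).2 rfl⟩
  let W (n : ℕ) : Nbhd := Nat.rec ⟨U, hU, hsU⟩ next n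
  have hW_anti : Antitone fun n => (W n).1 := antitone_nat_of_succ_le fun _ => sdiff_subset
  have hV_sub (n : ℕ) : V n (W n) ⊆ (W n).1 \ {s} := subset_closure.trans (hVW n (W n))
  refine ⟨fun n => x n (W n), fun n => V n (W n), fun n => hxA n _, fun n => hxV n _,
    fun n => hVo n _, fun n => (hV_sub n).trans (sdiff_subset_sdiff_left (hW_anti n.zero_le)),
    (pairwise_disjoint_on _).2 fun m n hmn => disjoint_left.2 fun y hym hyn => ?_⟩
  have hyW : y ∈ (W (m + 1)).1 := hW_anti hmn (hV_sub n hyn).1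
  exact hyW.2 (subset_closure hym)

theorem exists_isOpen_bump [NormalSpace K] [T1Space K] {x : K} {V : Set K} (hV : IsOpen V)
    (hx : x ∈ V) : ∃ O : Set K, IsOpen O ∧ x ∈ O ∧
      ∃ φ : C(K, ℝ), EqOn φ 1 O ∧ support φ ⊆ V ∧ ∀ y, φ y ∈ Icc (0 : ℝ) 1 := by
  obtain ⟨O, hO, hxO, hOV⟩ :=
    normal_exists_closure_subset isClosed_singleton hV (singleton_subset_iff.2 hx)
  obtain ⟨φ, hφ0, hφ1, hφ01⟩ := exists_continuous_zero_one_of_isClosed hV.isClosed_compl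
    isClosed_closure (disjoint_compl_left_iff_subset.2 hOV)
  exact ⟨O, hO, hxO rfl, φ, hφ1.mono subset_closure,
    fun y hy => not_not.1 fun hyV => hy (hφ0 hyV), hφ01⟩

end Separation

section DisjointSupports

variable {ι K : Type*}

theorem exists_forall_ne_apply_eq_zero [Nonempty ι] {M : Type*} [Zero M] {φ : ι → K → M}
    (hd : Pairwise (Disjoint on fun n => support (φ n))) (x : K) : ∃ m, ∀ n ≠ m, φ n x = 0 := by
  by_cases hx : ∃ m, φ m x ≠ 0
  · obtain ⟨m, hm⟩ := hx
    exact ⟨m, fun n hn => not_not.1 fun hnx => disjoint_left.1 (hd hn) hnx hm⟩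
  · push Not at hx
    exact ⟨Classical.arbitrary ι, fun n _ => hx n⟩

variable [TopologicalSpace K] [CompactSpace K] {E : Type*} [NormedAddCommGroup E]

theorem ContinuousMap.norm_sum_le_of_pairwise_disjoint_support {h : ι → C(K, E)}
    (hd : Pairwise (Disjoint on fun n => support (h n))) (s : Finset ι) {ε : ℝ} (hε : 0 ≤ ε)
    (hs : ∀ n ∈ s, ‖h n‖ ≤ ε) : ‖∑ n ∈ s, h n‖ ≤ ε := by
  refine (ContinuousMap.norm_le _ hε).2 fun x => ?_
  rw [ContinuousMap.sum_apply]
  by_cases hx : ∃ m ∈ s, h m x ≠ 0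
  · obtain ⟨m, hm, hxm⟩ := hx
    rw [Finset.sum_eq_single_of_mem m hm fun n _ hnm =>
      not_not.1 fun hxn => disjoint_left.1 (hd hnm) hxn hxm]
    exact ((h m).norm_coe_le_norm x).trans (hs m hm)
  · push Not at hx
    rwa [Finset.sum_eq_zero hx, norm_zero]

theorem ContinuousMap.summable_of_pairwise_disjoint_support [CompleteSpace E] {h : ℕ → C(K, E)}
    (hd : Pairwise (Disjoint on fun n => support (h n)))
    (h0 : Tendsto (fun n => ‖h n‖) atTop (𝓝 0)) : Summable h := by
  refine summable_iff_vanishing_norm.2 fun ε hε => ?_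
  obtain ⟨N, hN⟩ := Metric.tendsto_atTop.1 h0 (ε / 2) (half_pos hε)
  refine ⟨Finset.range N, fun t ht => ?_⟩
  have hsmall : ∀ n ∈ t, ‖h n‖ ≤ ε / 2 := fun n hn => by
    have hNn : N ≤ n := not_lt.1 fun hlt => Finset.disjoint_left.1 ht hn (Finset.mem_range.2 hlt)
    simpa [abs_of_nonneg (norm_nonneg _)] using (hN n hNn).le
  linarith [norm_sum_le_of_pairwise_disjoint_support hd t (half_pos hε).le hsmall]

end DisjointSupports

section Operators

variable {𝕜 : Type*} [RCLike 𝕜] {X Y K : Type*} [TopologicalSpace X] [CompactSpace X]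
  [TopologicalSpace Y] [CompactSpace Y] [TopologicalSpace K] [CompactSpace K]

structure IsUnitalPositiveContraction (T : C(X, 𝕜) →ₗ[𝕜] C(K, 𝕜)) : Prop where
  map_one : T 1 = 1
  norm_map_le : ∀ f, ‖T f‖ ≤ ‖f‖
  map_nonneg : ∀ f, 0 ≤ f → 0 ≤ T f

structure IsNiceEmbeddingOn (U : Set K) (T : C(X, 𝕜) →ₗ[𝕜] C(K, 𝕜)) : Prop
    extends IsUnitalPositiveContraction T where
  exists_apply_eq : ∀ t, ∃ x ∈ U, ∀ f, T f x = f t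

namespace IsUnitalPositiveContraction

variable {T : C(X, 𝕜) →ₗ[𝕜] C(K, 𝕜)}

theorem norm_map_sub_smul_one_le (hT : IsUnitalPositiveContraction T) (f : C(X, 𝕜)) (c : 𝕜) :
    ‖T f - c • 1‖ ≤ ‖f - c • 1‖ := by
  simpa [hT.map_one] using hT.norm_map_le (f - c • 1)

theorem comp {S : C(Y, 𝕜) →ₗ[𝕜] C(X, 𝕜)} (hT : IsUnitalPositiveContraction T)
    (hS : IsUnitalPositiveContraction S) : IsUnitalPositiveContraction (T ∘ₗ S) where
  map_one := by simp [hS.map_one, hT.map_one]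
  norm_map_le f := (hT.norm_map_le _).trans (hS.norm_map_le f)
  map_nonneg f hf := hT.map_nonneg _ (hS.map_nonneg f hf)

end IsUnitalPositiveContraction

theorem isUnitalPositiveContraction_compRight (h : C(K, X)) :
    IsUnitalPositiveContraction (ContinuousMap.compRightAlgHom 𝕜 𝕜 h).toLinearMap where
  map_one := map_one (ContinuousMap.compRightAlgHom 𝕜 𝕜 h)
  norm_map_le f := (ContinuousMap.norm_le _ (norm_nonneg f)).2 fun x => f.norm_coe_le_norm (h x)
  map_nonneg _ hf x := hf (h x)

theorem isNiceEmbeddingOn_compRight_const [Subsingleton X] (p : X) {U : Set K}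
    (hU : U.Nonempty) :
    IsNiceEmbeddingOn U (ContinuousMap.compRightAlgHom 𝕜 𝕜 (ContinuousMap.const K p)).toLinearMap
    where
  toIsUnitalPositiveContraction := isUnitalPositiveContraction_compRight _
  exists_apply_eq t := ⟨hU.some, hU.some_mem, fun f => congrArg f (Subsingleton.elim p t)⟩

theorem IsNiceEmbeddingOn.norm_map {U : Set K} {T : C(X, 𝕜) →ₗ[𝕜] C(K, 𝕜)}
    (hT : IsNiceEmbeddingOn U T) (f : C(X, 𝕜)) : ‖T f‖ = ‖f‖ := by
  refine le_antisymm (hT.norm_map_le f) ((ContinuousMap.norm_le _ (norm_nonneg _)).2 fun t => ?_)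
  obtain ⟨x, -, hx⟩ := hT.exists_apply_eq t
  exact hx f ▸ (T f).norm_coe_le_norm x

end Operators

theorem ContinuousMap.tendsto_norm_comp_sub_smul_one {𝕜 X ι : Type*} [RCLike 𝕜]
    [TopologicalSpace X] {l : Filter ι} {Y : ι → Type*} [∀ i, TopologicalSpace (Y i)]
    [∀ i, CompactSpace (Y i)] (f : C(X, 𝕜)) {p : X} (b : ∀ i, C(Y i, X))
    (hb : ∀ N ∈ 𝓝 p, ∀ᶠ i in l, range (b i) ⊆ N) :
    Tendsto (fun i => ‖f.comp (b i) - f p • 1‖) l (𝓝 0) := by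
  refine Metric.tendsto_nhds.2 fun ε hε => ?_
  have hN : {x | dist (f x) (f p) < ε / 2} ∈ 𝓝 p :=
    f.continuous.continuousAt.preimage_mem_nhds (Metric.ball_mem_nhds _ (half_pos hε))
  filter_upwards [hb _ hN] with i hi
  have hle : ‖f.comp (b i) - f p • 1‖ ≤ ε / 2 :=
    (ContinuousMap.norm_le _ (half_pos hε).le).2 fun y => by
      have hy : dist (f (b i y)) (f p) < ε / 2 := hi ⟨y, rfl⟩
      simpa [dist_eq_norm] using hy.le
  rw [Real.dist_0_eq_abs, abs_of_nonneg (norm_nonneg _)]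
  linarith

theorem ContinuousMap.norm_smul_le_of_mem_Icc {𝕜 K : Type*} [RCLike 𝕜] [TopologicalSpace K]
    [CompactSpace K] {φ : C(K, ℝ)} (hφ : ∀ x, φ x ∈ Icc (0 : ℝ) 1) (h : C(K, 𝕜)) :
    ‖φ • h‖ ≤ ‖h‖ :=
  (ContinuousMap.norm_le _ (norm_nonneg h)).2 fun x => by
    rw [ContinuousMap.smul_apply', norm_smul, Real.norm_of_nonneg (hφ x).1]
    exact (mul_le_of_le_one_left (norm_nonneg _) (hφ x).2).trans (h.norm_coe_le_norm x)

section Glue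

variable {𝕜 X K : Type*} [RCLike 𝕜] [TopologicalSpace X] [TopologicalSpace K] [CompactSpace K]
  (p : X) {φ : ℕ → C(K, ℝ)} {R : ℕ → C(X, 𝕜) →ₗ[𝕜] C(K, 𝕜)}

theorem summable_bump_smul (hφ : ∀ n x, φ n x ∈ Icc (0 : ℝ) 1)
    (hd : Pairwise (Disjoint on fun n => support (φ n)))
    (hR : ∀ f, Tendsto (fun n => ‖R n f - f p • 1‖) atTop (𝓝 0)) (f : C(X, 𝕜)) :
    Summable fun n => φ n • (R n f - f p • 1) :=
  ContinuousMap.summable_of_pairwise_disjoint_support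
    (hd.mono fun _ _ h => h.mono (support_smul_subset_left _ _) (support_smul_subset_left _ _))
    (squeeze_zero (fun _ => norm_nonneg _)
      (fun n => ContinuousMap.norm_smul_le_of_mem_Icc (hφ n) _) (hR f))

def glue (hφ : ∀ n x, φ n x ∈ Icc (0 : ℝ) 1) (hd : Pairwise (Disjoint on fun n => support (φ n)))
    (hR : ∀ f, Tendsto (fun n => ‖R n f - f p • 1‖) atTop (𝓝 0)) : C(X, 𝕜) →ₗ[𝕜] C(K, 𝕜) where
  toFun f := f p • 1 + ∑' n, φ n • (R n f - f p • 1)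
  map_add' f g := by
    simp only [map_add, ContinuousMap.add_apply, add_smul, add_sub_add_comm, smul_add,
      (summable_bump_smul p hφ hd hR f).tsum_add (summable_bump_smul p hφ hd hR g)]
    abel
  map_smul' c f := by
    have hterm : ∀ n, φ n • (R n (c • f) - (c • f) p • 1) = c • φ n • (R n f - f p • 1) :=
      fun n => by ext x; simp [smul_sub]
    rw [tsum_congr hterm, (summable_bump_smul p hφ hd hR f).tsum_const_smul c,
      ContinuousMap.smul_apply, smul_assoc, RingHom.id_apply, smul_add]

variable {p} {hφ : ∀ n x, φ n x ∈ Icc (0 : ℝ) 1}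
  {hd : Pairwise (Disjoint on fun n => support (φ n))}
  {hR : ∀ f, Tendsto (fun n => ‖R n f - f p • 1‖) atTop (𝓝 0)}

theorem glue_apply_of_forall_ne {x : K} {m : ℕ} (hm : ∀ n ≠ m, φ n x = 0) (f : C(X, 𝕜)) :
    glue p hφ hd hR f x = (1 - φ m x) • f p + φ m x • R m f x := by
  have hsum := ContinuousMap.tsum_apply (summable_bump_smul p hφ hd hR f) x
  simp only [glue, LinearMap.coe_mk, AddHom.coe_mk, ContinuousMap.add_apply, ← hsum]
  rw [tsum_eq_single m fun n hn => by simp [hm n hn]]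
  simp only [ContinuousMap.smul_apply', ContinuousMap.sub_apply, ContinuousMap.smul_apply,
    ContinuousMap.one_apply, _root_.smul_eq_mul, mul_one, smul_sub, sub_smul, one_smul]
  abel

theorem glue_apply_mem {C : Set 𝕜} (hC : Convex ℝ C) {f : C(X, 𝕜)} (hp : f p ∈ C)
    (hRC : ∀ n x, R n f x ∈ C) (x : K) : glue p hφ hd hR f x ∈ C := by
  obtain ⟨m, hm⟩ := exists_forall_ne_apply_eq_zero hd x
  rw [glue_apply_of_forall_ne hm]
  exact hC hp (hRC m x) (sub_nonneg.2 (hφ m x).2) (hφ m x).1 (sub_add_cancel 1 _)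

theorem glue_apply_of_eq_one {x : K} {m : ℕ} (hx : φ m x = 1) (f : C(X, 𝕜)) :
    glue p hφ hd hR f x = R m f x := by
  have hm : ∀ n ≠ m, φ n x = 0 := fun n hn =>
    not_not.1 fun hnx => disjoint_left.1 (hd hn) hnx (by simp [hx])
  simp [glue_apply_of_forall_ne hm, hx]

theorem glue_apply_of_forall_eq_zero {x : K} (hx : ∀ n, φ n x = 0) (f : C(X, 𝕜)) :
    glue p hφ hd hR f x = f p := by
  simp [glue_apply_of_forall_ne (m := 0) fun n _ => hx n, hx 0]

theorem isUnitalPositiveContraction_glue [CompactSpace X]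
    (hRc : ∀ n, IsUnitalPositiveContraction (R n)) :
    IsUnitalPositiveContraction (glue p hφ hd hR) where
  map_one := ContinuousMap.ext fun x => by
    simpa using glue_apply_mem (convex_singleton (1 : 𝕜)) (f := 1) (by simp)
      (fun n y => by simp [(hRc n).map_one]) x
  norm_map_le f := (ContinuousMap.norm_le _ (norm_nonneg f)).2 fun x =>
    mem_closedBall_zero_iff.1 <| glue_apply_mem (convex_closedBall 0 ‖f‖)
      (mem_closedBall_zero_iff.2 (f.norm_coe_le_norm p)) (fun n y => mem_closedBall_zero_iff.2
        (((R n f).norm_coe_le_norm y).trans ((hRc n).norm_map_le f))) x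
  map_nonneg f hf x := glue_apply_mem (convex_Ici 0) (hf p) (fun n => (hRc n).map_nonneg f hf) x

end Glue

theorem RCLike.nonneg_iff_exists_eq_algebraMap {𝕜 : Type*} [RCLike 𝕜] {z : 𝕜} :
    0 ≤ z ↔ ∃ r : ℝ, 0 ≤ r ∧ z = algebraMap ℝ 𝕜 r := by
  rw [RCLike.nonneg_iff_exists_ofReal]
  exact exists_congr fun r => and_congr_right' (by rw [RCLike.algebraMap_eq_ofReal, eq_comm])

theorem exists_isNiceEmbeddingOn {𝕜 : Type*} [RCLike 𝕜] {K : Type*} [TopologicalSpace K]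
    [CompactSpace K] [T2Space K] (α : Ordinal.{0}) (hα : α.card ≤ Cardinal.aleph0) {s : K}
    (hs : s ∈ cbDeriv K α) {U : Set K} (hU : IsOpen U) (hsU : s ∈ U) :
    ∃ T : C(𝕀 α, 𝕜) →ₗ[𝕜] C(K, 𝕜), IsNiceEmbeddingOn U T := by
  induction α using WellFoundedLT.induction generalizing s U with | _ α IH => ?_
  rcases eq_or_ne α 0 with rfl | h0
  · have : Subsingleton (𝕀 (0 : Ordinal.{0})) := by rw [opow_zero, Icc_self]; infer_instance
    exact ⟨_, isNiceEmbeddingOn_compRight_const (topPt 0) ⟨s, hsU⟩⟩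
  obtain ⟨g, hg, hcof⟩ := exists_blockStart_cofinal h0 hα
  obtain ⟨x, V, hxA, hxV, hVo, hVU, hVd⟩ := exists_pairwise_disjoint_isOpen_seq hU hsU fun n =>
    mem_derivedSet_of_mem_cbDeriv (hg n) hs
  choose O hO hxO φ hφO hφV hφ01 using fun n => exists_isOpen_bump (hVo n) (hxV n)
  choose T hT using fun n =>
    IH (g n) (hg n) ((card_le_card (hg n).le).trans hα) (hxA n) (hO n) (hxO n)
  let R n := T n ∘ₗ (ContinuousMap.compRightAlgHom 𝕜 𝕜 (blockMap hg n)).toLinearMap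
  have hR n : IsUnitalPositiveContraction (R n) :=
    (hT n).comp (isUnitalPositiveContraction_compRight _)
  have hRlim f : Tendsto (fun n => ‖R n f - f (topPt α) • 1‖) atTop (𝓝 0) :=
    squeeze_zero (fun _ => norm_nonneg _)
      (fun n => (hT n).norm_map_sub_smul_one_le (f.comp (blockMap hg n)) (f (topPt α)))
      (f.tendsto_norm_comp_sub_smul_one _ fun _ => eventually_range_blockMap_subset hg h0 hcof)
  have hd : Pairwise (Disjoint on fun n => support (φ n)) :=
    hVd.mono fun m n h => h.mono (hφV m) (hφV n)
  refine ⟨glue (topPt α) hφ01 hd hRlim, isUnitalPositiveContraction_glue hR, fun t => ?_⟩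
  by_cases ht : t = topPt α
  · have hφs n : φ n s = 0 := notMem_support.1 fun h => (hVU n (hφV n h)).2 rfl
    exact ⟨s, hsU, fun f => by rw [glue_apply_of_forall_eq_zero hφs, ht]⟩
  · obtain ⟨n, u, rfl⟩ := exists_blockMap_eq hg hcof ht
    obtain ⟨y, hyO, hy⟩ := (hT n).exists_apply_eq u
    have hyV : y ∈ V n := hφV n (by simp [hφO n hyO])
    exact ⟨y, (hVU n hyV).1, fun f => (glue_apply_of_eq_one (hφO n hyO) f).trans (hy _)⟩

/-- Let `α < ω₁` be a countable ordinal and `K` a compact Hausdorff space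
with `K^(α) ≠ ∅`, scalars `𝕜 ∈ {ℝ, ℂ}`. Then there is a linear isometric embedding
`T : C([1, ω^α]) → C(K)` which is positive, unital, and such that for every `t ∈ [1, ω^α]`
there is `s_t ∈ K` with `Tf s_t = f t` for every `f`. -/
theorem nice_embedding_of_CB_derivative_nonempty {𝕜 : Type*} [RCLike 𝕜]
    {K : Type*} [TopologicalSpace K] [CompactSpace K] [T2Space K]
    (α : Ordinal.{0}) (hα : α.card ≤ Cardinal.aleph0)
    (hK : (cbDeriv K α).Nonempty) :
    ∃ T : C(Set.Icc (1 : Ordinal.{0}) (Ordinal.omega0 ^ α), 𝕜) →ₗᵢ[𝕜] C(K, 𝕜),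
      (∀ f : C(Set.Icc (1 : Ordinal.{0}) (Ordinal.omega0 ^ α), 𝕜),
        (∀ t, ∃ r : ℝ, 0 ≤ r ∧ f t = algebraMap ℝ 𝕜 r) →
        ∀ s : K, ∃ r : ℝ, 0 ≤ r ∧ T f s = algebraMap ℝ 𝕜 r) ∧
      T 1 = 1 ∧
      ∀ t : Set.Icc (1 : Ordinal.{0}) (Ordinal.omega0 ^ α), ∃ s : K,
        ∀ f : C(Set.Icc (1 : Ordinal.{0}) (Ordinal.omega0 ^ α), 𝕜), T f s = f t := by
  obtain ⟨s, hs⟩ := hK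
  obtain ⟨T, hT⟩ := exists_isNiceEmbeddingOn (𝕜 := 𝕜) α hα hs isOpen_univ (mem_univ s)
  refine ⟨⟨T, hT.norm_map⟩, fun f hf x => ?_, hT.map_one, fun t => ?_⟩
  · have hf₀ : 0 ≤ f := fun t => RCLike.nonneg_iff_exists_eq_algebraMap.2 (hf t)
    exact RCLike.nonneg_iff_exists_eq_algebraMap.1 (hT.map_nonneg f hf₀ x)
  · obtain ⟨x, -, hx⟩ := hT.exists_apply_eq t
    exact ⟨x, hx⟩

end
end
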